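/- arXiv:solv-int/9610001 — 3 statements merged into one kernel-verified Lean document; each statement's English description precedes it below -/
import Mathlib

section
/- Let n ≥ 1 and let 𝐀, 𝐂 be linear operators on 𝐠 = Fin n → g with blocks A_{ij} and C_{ij}, where the blocks of 𝐀 satisfy (A_{ij})* = −A_{ji}. Then the condition Hom(𝐂, 𝐀) on the algebra 𝐠 holds if and only if both of the following hold: (1) Hom(C_{ij}, A_{jj}) for all pairs 1 ≤ i, j ≤ n; (2) Aux(C_{ij}, C_{ik}; A_{kj}, A_{jk}) for all 1 ≤ i, j, k ≤ n with j < k. -/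
open Matrix

attribute [local instance] Matrix.normedAddCommGroup Matrix.normedSpace

/-- The trace form `⟨X,Y⟩ = trace (X⬝Y)` on `g = Matrix (Fin N) (Fin N) ℝ`. -/
noncomputable def tf {N : ℕ} (X Y : Matrix (Fin N) (Fin N) ℝ) : ℝ := (X * Y).trace

/-- The modified Yang–Baxter equation mYB(R;α) on `g`. -/
def mYB {N : ℕ} (R : Matrix (Fin N) (Fin N) ℝ →ₗ[ℝ] Matrix (Fin N) (Fin N) ℝ) (α : ℝ) : Prop :=
  ∀ X Y, R X * R Y - R Y * R X
    = R ((R X * Y - Y * R X) + (X * R Y - R Y * X)) - α • (X * Y - Y * X)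

/-- The condition Hom(S,A) on `g`. -/
def homc {N : ℕ} (S A : Matrix (Fin N) (Fin N) ℝ →ₗ[ℝ] Matrix (Fin N) (Fin N) ℝ) : Prop :=
  ∀ X Y, S X * S Y - S Y * S X = S ((A X * Y - Y * A X) + (X * A Y - A Y * X))

/-- The condition Aux(P,Q;R,S): `[P(X),Q(Y)] = Q([R(X),Y]) + P([X,S(Y)])`. -/
def aux {N : ℕ} (P Q R S : Matrix (Fin N) (Fin N) ℝ →ₗ[ℝ] Matrix (Fin N) (Fin N) ℝ) : Prop :=
  ∀ X Y, P X * Q Y - Q Y * P X = Q (R X * Y - Y * R X) + P (X * S Y - S Y * X)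

/-- The operator on `𝐠 = Fin n → g` encoded by the blocks `A i j`:
`(𝐀 u)_i = Σ_j A_{ij}(u_j)`. -/
noncomputable def opApp {N n : ℕ}
    (A : Fin n → Fin n → (Matrix (Fin N) (Fin N) ℝ →ₗ[ℝ] Matrix (Fin N) (Fin N) ℝ))
    (X : Fin n → Matrix (Fin N) (Fin N) ℝ) : Fin n → Matrix (Fin N) (Fin N) ℝ :=
  fun i => ∑ j, A i j (X j)

/-- The modified Yang–Baxter equation mYB(𝐀;α) on the direct sum `𝐠 = Fin n → g`
(with componentwise multiplication), for the operator encoded by blocks `A i j`. -/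
def mYBbig {N n : ℕ}
    (A : Fin n → Fin n → (Matrix (Fin N) (Fin N) ℝ →ₗ[ℝ] Matrix (Fin N) (Fin N) ℝ))
    (α : ℝ) : Prop :=
  ∀ X Y : Fin n → Matrix (Fin N) (Fin N) ℝ,
    opApp A X * opApp A Y - opApp A Y * opApp A X
      = opApp A ((opApp A X * Y - Y * opApp A X) + (X * opApp A Y - opApp A Y * X))
        - α • (X * Y - Y * X)

/-- The condition Hom(𝐂,𝐀) on the direct sum `𝐠 = Fin n → g`, for operators
encoded by blocks. -/
def homBig {N n : ℕ}
    (C A : Fin n → Fin n → (Matrix (Fin N) (Fin N) ℝ →ₗ[ℝ] Matrix (Fin N) (Fin N) ℝ)) : Prop :=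
  ∀ X Y : Fin n → Matrix (Fin N) (Fin N) ℝ,
    opApp C X * opApp C Y - opApp C Y * opApp C X
      = opApp C ((opApp A X * Y - Y * opApp A X) + (X * opApp A Y - opApp A Y * X))

/-!
Both sides of Hom(𝐂,𝐀) are bilinear in `(X, Y)`, so it suffices to test it on vectors
supported in a single summand, `X = e_j X₀` and `Y = e_k Y₀`. Reading off the `i`-th component
gives exactly Aux(C_{ij}, C_{ik}; A_{kj}, A_{jk}) for all `i, j, k`. For `j = k` this is
Hom(C_{ij}, A_{jj}), and the case `j > k` is the case `k < j` with `X` and `Y` swapped, by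
antisymmetry of the commutator.
-/

section SingleBlock

variable {N : ℕ} {P Q R S : Matrix (Fin N) (Fin N) ℝ →ₗ[ℝ] Matrix (Fin N) (Fin N) ℝ}

theorem homc_iff_aux : homc S R ↔ aux S S R R := by
  simp only [homc, aux, map_add]

theorem aux.symm (h : aux P Q R S) : aux Q P S R := by
  intro X Y
  rw [← neg_sub, h Y X, neg_add, ← map_neg, ← map_neg, neg_sub, neg_sub, add_comm]

end SingleBlock

section BlockDecomposition

variable {N n : ℕ}
  (A C : Fin n → Fin n → (Matrix (Fin N) (Fin N) ℝ →ₗ[ℝ] Matrix (Fin N) (Fin N) ℝ))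

theorem opApp_add (X Y : Fin n → Matrix (Fin N) (Fin N) ℝ) :
    opApp A (X + Y) = opApp A X + opApp A Y := by
  funext i
  simp only [opApp, Pi.add_apply, map_add, Finset.sum_add_distrib]

theorem opApp_single (j : Fin n) (X : Matrix (Fin N) (Fin N) ℝ) :
    opApp A (Pi.single j X) = fun i => A i j X := by
  funext i
  simp [opApp, Pi.single_apply, apply_ite]

theorem opApp_commutator_apply (X Y : Fin n → Matrix (Fin N) (Fin N) ℝ) (i : Fin n) :
    (opApp C X * opApp C Y - opApp C Y * opApp C X) i
      = ∑ j, ∑ k, (C i j (X j) * C i k (Y k) - C i k (Y k) * C i j (X j)) := by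
  simp only [opApp, Pi.sub_apply, Pi.mul_apply, Finset.sum_mul_sum]
  rw [Finset.sum_comm (f := fun j k => C i j (Y j) * C i k (X k))]
  simp only [← Finset.sum_sub_distrib]

theorem aux_of_homBig (h : homBig C A) (i j k : Fin n) :
    aux (C i j) (C i k) (A k j) (A j k) := by
  intro X Y
  simpa only [opApp_single, ← Pi.single_mul_left, ← Pi.single_mul_right, ← Pi.single_sub,
    opApp_add, Pi.add_apply, Pi.sub_apply, Pi.mul_apply]
    using congrFun (h (Pi.single j X) (Pi.single k Y)) i

theorem homBig_of_aux (h : ∀ i j k, aux (C i j) (C i k) (A k j) (A j k)) : homBig C A := by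
  intro X Y
  funext i
  rw [opApp_commutator_apply]
  calc ∑ j, ∑ k, (C i j (X j) * C i k (Y k) - C i k (Y k) * C i j (X j))
      = ∑ j, ∑ k, (C i k (A k j (X j) * Y k - Y k * A k j (X j))
          + C i j (X j * A j k (Y k) - A j k (Y k) * X j)) :=
        Finset.sum_congr rfl fun j _ => Finset.sum_congr rfl fun k _ => h i j k (X j) (Y k)
    _ = _ := by
        simp only [opApp, Pi.add_apply, Pi.sub_apply, Pi.mul_apply, Finset.sum_mul, Finset.mul_sum,
          ← Finset.sum_sub_distrib, map_sum, map_add, Finset.sum_add_distrib]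
        exact congrArg (· + _) Finset.sum_comm

theorem homBig_iff_forall_aux :
    homBig C A ↔ ∀ i j k, aux (C i j) (C i k) (A k j) (A j k) :=
  ⟨aux_of_homBig A C, homBig_of_aux A C⟩

theorem forall_aux_iff_homc_and_aux_of_lt :
    (∀ i j k, aux (C i j) (C i k) (A k j) (A j k)) ↔
      (∀ i j, homc (C i j) (A j j)) ∧ ∀ i j k, j < k → aux (C i j) (C i k) (A k j) (A j k) := by
  constructor
  · intro h
    exact ⟨fun i j => homc_iff_aux.2 (h i j j), fun i j k _ => h i j k⟩
  · rintro ⟨hdiag, hlt⟩ i j k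
    rcases lt_trichotomy j k with hjk | rfl | hkj
    · exact hlt i j k hjk
    · exact homc_iff_aux.1 (hdiag i j)
    · exact (hlt i k j hkj).symm

end BlockDecomposition

theorem statement6_general (N n : ℕ)
    (A C : Fin n → Fin n → (Matrix (Fin N) (Fin N) ℝ →ₗ[ℝ] Matrix (Fin N) (Fin N) ℝ)) :
    homBig C A ↔
      ((∀ i j, homc (C i j) (A j j))
        ∧ (∀ i j k, j < k → aux (C i j) (C i k) (A k j) (A j k))) :=
  (homBig_iff_forall_aux A C).trans (forall_aux_iff_homc_and_aux_of_lt A C)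

theorem statement6 (N n : ℕ) (hN : 1 ≤ N) (hn : 1 ≤ n)
    (A C : Fin n → Fin n → (Matrix (Fin N) (Fin N) ℝ →ₗ[ℝ] Matrix (Fin N) (Fin N) ℝ))
    (hskew : ∀ i j X Y, tf (A i j X) Y = - tf X (A j i Y)) :
    homBig C A ↔
      ((∀ i j, homc (C i j) (A j j))
        ∧ (∀ i j k, j < k → aux (C i j) (C i k) (A k j) (A j k))) :=
  statement6_general N n A C
end

section
/- Let i, j, k be three distinct indices and let A_{xy}, for ordered pairs of distinct elements x, y ∈ {i,j,k}, be linear operators on g satisfying (A_{xy})* = −A_{yx}. If the condition Aux(A_{ij}, A_{ik}; A_{kj}, A_{jk}) holds, then the condition Aux(A_{jk}, A_{ji}; A_{ik}, A_{ki}) also holds; that is, the Aux condition is invariant under cyclic shifts of the triple (i,j,k). -/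
open Matrix

/-- Nondegeneracy of the trace form. -/
lemma tf_nondeg {N : ℕ} (M : Matrix (Fin N) (Fin N) ℝ)
    (h : ∀ W, tf W M = 0) : M = 0 := by
  ext a b
  have := h (Matrix.single b a 1)
  simpa [tf, Matrix.trace, Matrix.diag, Matrix.mul_apply, Matrix.single,
    ite_and, Finset.sum_ite_eq, Finset.sum_ite_eq'] using this

/-- Symmetry of the trace form. -/
lemma tf_symm {N : ℕ} (X Y : Matrix (Fin N) (Fin N) ℝ) : tf X Y = tf Y X :=
  Matrix.trace_mul_comm X Y

/-- Invariance of the trace form: `⟨[X,Y],Z⟩ = ⟨X,[Y,Z]⟩`. -/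
lemma tf_inv {N : ℕ} (X Y Z : Matrix (Fin N) (Fin N) ℝ) :
    tf (X * Y - Y * X) Z = tf X (Y * Z - Z * Y) := by
  simp only [tf, Matrix.sub_mul, Matrix.mul_sub, Matrix.trace_sub, Matrix.mul_assoc]
  congr 1
  rw [Matrix.trace_mul_comm, Matrix.mul_assoc]

/-- Linearity of the trace form in the second argument (subtraction). -/
lemma tf_sub_right {N : ℕ} (X Y Z : Matrix (Fin N) (Fin N) ℝ) :
    tf X (Y - Z) = tf X Y - tf X Z := by
  simp [tf, Matrix.mul_sub]

lemma tf_add_right {N : ℕ} (X Y Z : Matrix (Fin N) (Fin N) ℝ) :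
    tf X (Y + Z) = tf X Y + tf X Z := by
  simp [tf, Matrix.mul_add]

lemma tf_add_left {N : ℕ} (X Y Z : Matrix (Fin N) (Fin N) ℝ) :
    tf (X + Y) Z = tf X Z + tf Y Z := by
  simp [tf, Matrix.add_mul]

lemma tf_sub_left {N : ℕ} (X Y Z : Matrix (Fin N) (Fin N) ℝ) :
    tf (X - Y) Z = tf X Z - tf Y Z := by
  simp [tf, Matrix.sub_mul]

/-- for operators `A x y` indexed by ordered pairs of distinct elements of a
three-element set `{i,j,k}` and satisfying `(A_{xy})* = −A_{yx}` with respect to the trace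
form, the condition Aux(A_{ij}, A_{ik}; A_{kj}, A_{jk}) implies the condition
Aux(A_{jk}, A_{ji}; A_{ik}, A_{ki}); i.e. Aux is invariant under the cyclic shift
`(i,j,k) ↦ (j,k,i)`. -/
theorem statement7 (N : ℕ) (hN : 1 ≤ N) {ι : Type*} (i j k : ι)
    (hij : i ≠ j) (hik : i ≠ k) (hjk : j ≠ k)
    (A : ι → ι → (Matrix (Fin N) (Fin N) ℝ →ₗ[ℝ] Matrix (Fin N) (Fin N) ℝ))
    (hskew : ∀ x y, x ≠ y → x ∈ ({i, j, k} : Set ι) → y ∈ ({i, j, k} : Set ι) →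
      ∀ X Y, tf (A x y X) Y = - tf X (A y x Y))
    (haux : aux (A i j) (A i k) (A k j) (A j k)) :
    aux (A j k) (A j i) (A i k) (A k i) := by
  have mi : i ∈ ({i, j, k} : Set ι) := by simp
  have mj : j ∈ ({i, j, k} : Set ι) := by simp
  have mk : k ∈ ({i, j, k} : Set ι) := by simp
  have sij := hskew i j hij mi mj
  have sik := hskew i k hik mi mk
  have skj := hskew k j (Ne.symm hjk) mk mj
  intro X Y
  rw [← sub_eq_zero]
  apply tf_nondeg
  intro W
  -- The given Aux identity at (W, X), paired with Y via the trace form.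
  have H := congrArg (fun M => tf M Y) (haux W X)
  -- Rewrite each of the three terms.
  have e1 : tf (A i j W * A i k X - A i k X * A i j W) Y
      = - tf W (A j i (A i k X * Y - Y * A i k X)) := by
    rw [tf_inv, sij]
  have e2 : tf (A i k (A k j W * X - X * A k j W)) Y
      = tf W (A j k (X * A k i Y - A k i Y * X)) := by
    rw [sik, tf_inv, skj]
    ring_nf
  have e3 : tf (A i j (W * A j k X - A j k X * W)) Y
      = - tf W (A j k X * A j i Y - A j i Y * A j k X) := by
    rw [sij, tf_inv]
  rw [tf_add_left, e1, e2, e3] at H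
  rw [tf_sub_right, tf_add_right]
  linarith
end

section
/- Let 𝐠 carry the bracket PB(𝐀,𝐁,𝐂,𝐃) with arbitrary blocks A_{ij}, B_{ij}, C_{ij}, D_{ij}. Let φ : g → ℝ be C^∞ and Ad-invariant, and set Φ(𝐮) = φ(u_n⬝⋯⬝u_1). Then for every i ∈ {1,…,n}, all matrix positions a, b, and all 𝐮 ∈ 𝐠: {Φ, e_{i,a,b}}(𝐮) = (u_i⬝𝓡_i − 𝓛_i⬝u_i)_{ab}, where e_{i,a,b}(𝐮) = (u_i)_{ab}, 𝓡_i = Σ_{j=1}^{n} (A_{i,j+1} + B_{i,j})(dφ(T_j)) and 𝓛_i = Σ_{j=1}^{n} (D_{i,j} + C_{i,j+1})(dφ(T_j)), the second subscripts being taken mod n (so A_{i,n+1} = A_{i,1} and C_{i,n+1} = C_{i,1}), and T_j = u_j⬝⋯⬝u_1⬝u_n⬝⋯⬝u_{j+1}. -/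
open Matrix

attribute [local instance] Matrix.normedAddCommGroup Matrix.normedSpace

/-- The gradient of a function `φ : g → ℝ` with respect to the trace form:
it satisfies `⟨∇φ(u), X⟩ = (fderiv ℝ φ u) X` for all `X`. -/
noncomputable def grad {N : ℕ} (φ : Matrix (Fin N) (Fin N) ℝ → ℝ)
    (u : Matrix (Fin N) (Fin N) ℝ) : Matrix (Fin N) (Fin N) ℝ :=
  Matrix.of fun i j => fderiv ℝ φ u (Matrix.single j i 1)

/-- `dφ(u) = u ⬝ ∇φ(u)` -/
noncomputable def dr {N : ℕ} (φ : Matrix (Fin N) (Fin N) ℝ → ℝ)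
    (u : Matrix (Fin N) (Fin N) ℝ) : Matrix (Fin N) (Fin N) ℝ := u * grad φ u

/-- `d'φ(u) = ∇φ(u) ⬝ u` -/
noncomputable def dl {N : ℕ} (φ : Matrix (Fin N) (Fin N) ℝ → ℝ)
    (u : Matrix (Fin N) (Fin N) ℝ) : Matrix (Fin N) (Fin N) ℝ := grad φ u * u

/-- The `j`-th partial gradient `∇_jΦ(𝐮)` of a function `Φ : 𝐠 → ℝ` on
`𝐠 = Fin n → g`: it satisfies `⟨∇_jΦ(𝐮),X⟩ = DΦ(𝐮)(X placed in the j-th slot)`. -/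
noncomputable def bigGrad {N n : ℕ} (Φ : (Fin n → Matrix (Fin N) (Fin N) ℝ) → ℝ)
    (u : Fin n → Matrix (Fin N) (Fin N) ℝ) (j : Fin n) : Matrix (Fin N) (Fin N) ℝ :=
  Matrix.of fun a b => fderiv ℝ Φ u (Pi.single j (Matrix.single b a 1))

/-- `d_jΦ(𝐮) = u_j ⬝ ∇_jΦ(𝐮)` -/
noncomputable def ddj {N n : ℕ} (Φ : (Fin n → Matrix (Fin N) (Fin N) ℝ) → ℝ)
    (u : Fin n → Matrix (Fin N) (Fin N) ℝ) (j : Fin n) : Matrix (Fin N) (Fin N) ℝ :=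
  u j * bigGrad Φ u j

/-- `d'_jΦ(𝐮) = ∇_jΦ(𝐮) ⬝ u_j` -/
noncomputable def ddj' {N n : ℕ} (Φ : (Fin n → Matrix (Fin N) (Fin N) ℝ) → ℝ)
    (u : Fin n → Matrix (Fin N) (Fin N) ℝ) (j : Fin n) : Matrix (Fin N) (Fin N) ℝ :=
  bigGrad Φ u j * u j

/-- The monodromy `𝓜(𝐮) = u_n ⬝ ⋯ ⬝ u_1` (in 1-based notation `u i = u_{i+1}`). -/
noncomputable def monod {N n : ℕ} (u : Fin n → Matrix (Fin N) (Fin N) ℝ) :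
    Matrix (Fin N) (Fin N) ℝ :=
  (List.ofFn u).reverse.prod

/-- The decreasing partial product `u_j ⬝ ⋯ ⬝ u_1` (`j` 1-based, `0 ≤ j ≤ n`). -/
noncomputable def downProd {N n : ℕ} (u : Fin n → Matrix (Fin N) (Fin N) ℝ) (j : ℕ) :
    Matrix (Fin N) (Fin N) ℝ :=
  ((List.ofFn u).take j).reverse.prod

/-- The decreasing partial product `u_n ⬝ ⋯ ⬝ u_{j+1}` (`j` 1-based, `0 ≤ j ≤ n`). -/
noncomputable def upProd {N n : ℕ} (u : Fin n → Matrix (Fin N) (Fin N) ℝ) (j : ℕ) :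
    Matrix (Fin N) (Fin N) ℝ :=
  ((List.ofFn u).drop j).reverse.prod

/-- `T_j = u_j ⬝ ⋯ ⬝ u_1 ⬝ u_n ⬝ ⋯ ⬝ u_{j+1}` (`j` 1-based; `T_0 = T_n = 𝓜(𝐮)`). -/
noncomputable def tmat {N n : ℕ} (u : Fin n → Matrix (Fin N) (Fin N) ℝ) (j : ℕ) :
    Matrix (Fin N) (Fin N) ℝ :=
  downProd u j * upProd u j

/-- The quadratic bracket PB(A,B,C,D) on `g`. -/
noncomputable def pb {N : ℕ}
    (A B C D : Matrix (Fin N) (Fin N) ℝ →ₗ[ℝ] Matrix (Fin N) (Fin N) ℝ)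
    (φ ψ : Matrix (Fin N) (Fin N) ℝ → ℝ) (u : Matrix (Fin N) (Fin N) ℝ) : ℝ :=
  tf (A (dl φ u)) (dl ψ u) - tf (D (dr φ u)) (dr ψ u)
    + tf (B (dr φ u)) (dl ψ u) - tf (C (dl φ u)) (dr ψ u)

/-- The quadratic bracket PB(𝐀,𝐁,𝐂,𝐃) on `𝐠 = Fin n → g`, for operators
encoded by blocks `A i j`, `B i j`, `C i j`, `D i j`. -/
noncomputable def bigPB {N n : ℕ}
    (A B C D : Fin n → Fin n → (Matrix (Fin N) (Fin N) ℝ →ₗ[ℝ] Matrix (Fin N) (Fin N) ℝ))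
    (Φ Ψ : (Fin n → Matrix (Fin N) (Fin N) ℝ) → ℝ)
    (u : Fin n → Matrix (Fin N) (Fin N) ℝ) : ℝ :=
  ∑ i, ∑ j,
    (tf (A i j (ddj' Φ u j)) (ddj' Ψ u i) - tf (D i j (ddj Φ u j)) (ddj Ψ u i)
      + tf (B i j (ddj Φ u j)) (ddj' Ψ u i) - tf (C i j (ddj' Φ u j)) (ddj Ψ u i))

/-- Ad-invariance of `φ : g → ℝ`: `φ (v ⬝ u ⬝ v⁻¹) = φ u` for every invertible `v`. -/
def AdInvariant {N : ℕ} (φ : Matrix (Fin N) (Fin N) ℝ → ℝ) : Prop :=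
  ∀ (u v : Matrix (Fin N) (Fin N) ℝ), IsUnit v → φ (v * u * v⁻¹) = φ u

/-- The cyclic successor on `Fin n` (index shift mod n). -/
def finSucc {n : ℕ} (hn : 1 ≤ n) (j : Fin n) : Fin n :=
  ⟨(j.val + 1) % n, Nat.mod_lt _ hn⟩


section Aux

variable {N n : ℕ}

/-! ### Trace form basics -/

lemma tf_std (Y : Matrix (Fin N) (Fin N) ℝ) (a b : Fin N) :
    tf Y (Matrix.single b a 1) = Y a b := by
  classical
  simp only [tf, Matrix.trace, Matrix.diag, Matrix.mul_apply]
  simp [Matrix.single, Matrix.of_apply, ite_and, Finset.sum_ite_eq]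

lemma matrix_eq_sum (X : Matrix (Fin N) (Fin N) ℝ) :
    X = ∑ a : Fin N, ∑ b : Fin N, X a b • Matrix.single a b 1 := by
  have := matrix_eq_sum_single X
  convert this using 4 with a _ b _
  rw [smul_single, smul_eq_mul, mul_one]

lemma tf_grad (φ : Matrix (Fin N) (Fin N) ℝ → ℝ) (v X : Matrix (Fin N) (Fin N) ℝ) :
    tf (grad φ v) X = fderiv ℝ φ v X := by
  conv_lhs => rw [matrix_eq_sum X]
  conv_rhs => rw [matrix_eq_sum X]
  simp only [tf, Matrix.mul_sum, Matrix.mul_smul, Matrix.trace_sum, Matrix.trace_smul,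
    map_sum, _root_.map_smul, smul_eq_mul]
  apply Finset.sum_congr rfl; intro a _
  apply Finset.sum_congr rfl; intro b _
  congr 1
  have := tf_std (grad φ v) b a
  rw [tf] at this
  rw [this, grad, Matrix.of_apply]

lemma tf_ext {M M' : Matrix (Fin N) (Fin N) ℝ}
    (h : ∀ X, tf M X = tf M' X) : M = M' := by
  ext a b
  have := h (Matrix.single b a 1)
  rwa [tf_std, tf_std] at this

lemma tf_mul_std (Y M : Matrix (Fin N) (Fin N) ℝ) (a b : Fin N) :
    tf Y (M * Matrix.single b a 1) = (Y * M) a b := by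
  rw [tf, ← Matrix.mul_assoc, ← tf, tf_std]

lemma tf_std_mul (Y M : Matrix (Fin N) (Fin N) ℝ) (a b : Fin N) :
    tf Y (Matrix.single b a 1 * M) = (M * Y) a b := by
  rw [tf, ← Matrix.mul_assoc, Matrix.trace_mul_comm, ← Matrix.mul_assoc, ← tf, tf_std]

lemma tf_zero_right (X : Matrix (Fin N) (Fin N) ℝ) : tf X 0 = 0 := by simp [tf]

/-! ### List product lemmas -/

lemma monod_eq_up_down (u : Fin n → Matrix (Fin N) (Fin N) ℝ) (j : ℕ) :
    monod u = upProd u j * downProd u j := by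
  rw [monod, downProd, upProd, ← List.prod_append, ← List.reverse_append, List.take_append_drop]

lemma downProd_zero (u : Fin n → Matrix (Fin N) (Fin N) ℝ) : downProd u 0 = 1 := by
  simp [downProd]

lemma downProd_n (u : Fin n → Matrix (Fin N) (Fin N) ℝ) : downProd u n = monod u := by
  simp [downProd, monod, List.take_of_length_le]

lemma upProd_zero (u : Fin n → Matrix (Fin N) (Fin N) ℝ) : upProd u 0 = monod u := by
  simp [upProd, monod]

lemma upProd_n (u : Fin n → Matrix (Fin N) (Fin N) ℝ) : upProd u n = 1 := by
  simp [upProd, List.drop_of_length_le]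

lemma downProd_succ (u : Fin n → Matrix (Fin N) (Fin N) ℝ) (j : Fin n) :
    downProd u (j.val + 1) = u j * downProd u j.val := by
  rw [downProd, downProd]
  rw [List.take_succ]
  simp [List.ofFnNthVal, j.isLt, List.prod_append]

lemma upProd_succ (u : Fin n → Matrix (Fin N) (Fin N) ℝ) (j : Fin n) :
    upProd u j.val = upProd u (j.val + 1) * u j := by
  rw [upProd, upProd, List.drop_eq_getElem_cons (by simp)]
  simp

lemma tmat_zero (u : Fin n → Matrix (Fin N) (Fin N) ℝ) : tmat u 0 = monod u := by
  rw [tmat, downProd_zero, upProd_zero, Matrix.one_mul]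

lemma tmat_n (u : Fin n → Matrix (Fin N) (Fin N) ℝ) : tmat u n = monod u := by
  rw [tmat, downProd_n, upProd_n, Matrix.mul_one]

lemma downProd_update (u : Fin n → Matrix (Fin N) (Fin N) ℝ) (k : Fin n)
    (Z : Matrix (Fin N) (Fin N) ℝ) :
    downProd (Function.update u k Z) k.val = downProd u k.val := by
  rw [downProd, downProd]
  congr 2
  apply List.ext_getElem (by simp)
  intro i h1 h2
  simp only [List.getElem_take, List.getElem_ofFn]
  apply Function.update_of_ne
  simp only [List.length_take, List.length_ofFn, lt_min_iff] at h1
  exact fun hh => absurd (congrArg Fin.val hh) (by simp; omega)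

lemma upProd_update (u : Fin n → Matrix (Fin N) (Fin N) ℝ) (k : Fin n)
    (Z : Matrix (Fin N) (Fin N) ℝ) :
    upProd (Function.update u k Z) (k.val + 1) = upProd u (k.val + 1) := by
  rw [upProd, upProd]
  congr 2
  apply List.ext_getElem (by simp)
  intro i h1 h2
  simp only [List.getElem_drop, List.getElem_ofFn]
  apply Function.update_of_ne
  exact fun hh => absurd (congrArg Fin.val hh) (by simp; omega)

lemma monod_update (u : Fin n → Matrix (Fin N) (Fin N) ℝ) (k : Fin n)
    (Z : Matrix (Fin N) (Fin N) ℝ) :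
    monod (Function.update u k Z) = upProd u (k.val + 1) * Z * downProd u k.val := by
  rw [monod_eq_up_down (Function.update u k Z) (k.val + 1), downProd_succ _ k,
    upProd_update, downProd_update]
  rw [Function.update_self, Matrix.mul_assoc]

/-! ### Derivative of the monodromy -/

theorem ofFn_reverse {α : Type*} {m : ℕ} (u : Fin m → α) :
    (List.ofFn u).reverse = List.ofFn (u ∘ Fin.rev) := by
  apply List.ext_getElem (by simp)
  intro i h1 h2
  simp only [List.length_reverse, List.length_ofFn] at h1
  simp only [List.getElem_reverse, List.getElem_ofFn, Function.comp_apply]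
  exact congrArg _ (Fin.ext (by simp [Fin.rev]; omega))

noncomputable def revCLM :
    (Fin n → Matrix (Fin N) (Fin N) ℝ) →L[ℝ] (Fin n → Matrix (Fin N) (Fin N) ℝ) :=
  (LinearMap.funLeft ℝ _ Fin.rev).toContinuousLinearMap

lemma monod_eq_comp (w : Fin n → Matrix (Fin N) (Fin N) ℝ) :
    monod w = ContinuousMultilinearMap.mkPiAlgebraFin ℝ n _ (revCLM w) := by
  rw [monod, ofFn_reverse, ContinuousMultilinearMap.mkPiAlgebraFin_apply]
  rfl

noncomputable def monodDeriv (u : Fin n → Matrix (Fin N) (Fin N) ℝ) :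
    (Fin n → Matrix (Fin N) (Fin N) ℝ) →L[ℝ] Matrix (Fin N) (Fin N) ℝ :=
  ((ContinuousMultilinearMap.mkPiAlgebraFin ℝ n _).linearDeriv (revCLM u)).comp revCLM

lemma hasFDerivAt_monod (u : Fin n → Matrix (Fin N) (Fin N) ℝ) :
    HasFDerivAt monod (monodDeriv u) u := by
  have h1 := (ContinuousMultilinearMap.mkPiAlgebraFin ℝ n
      (Matrix (Fin N) (Fin N) ℝ)).hasFDerivAt (x := revCLM u)
  have h2 := h1.comp u (revCLM.hasFDerivAt)
  exact h2.congr_of_eventuallyEq (by filter_upwards with w; exact (monod_eq_comp w))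

lemma revCLM_single (j : Fin n) (Y : Matrix (Fin N) (Fin N) ℝ) :
    revCLM (Pi.single j Y) = Pi.single (Fin.rev j) Y := by
  funext i
  simp only [revCLM, LinearMap.coe_toContinuousLinearMap', LinearMap.funLeft_apply]
  by_cases h : i = Fin.rev j
  · subst h; rw [Fin.rev_rev]; simp
  · rw [Pi.single_eq_of_ne h, Pi.single_eq_of_ne]
    intro hc; exact h (by rw [← hc, Fin.rev_rev])

lemma update_rev (u : Fin n → Matrix (Fin N) (Fin N) ℝ) (j : Fin n)
    (Y : Matrix (Fin N) (Fin N) ℝ) :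
    Function.update (⇑(revCLM (N := N) (n := n)) u) (Fin.rev j) Y
      = revCLM (Function.update u j Y) := by
  funext i
  show _ = Function.update u j Y (Fin.rev i)
  by_cases h : i = Fin.rev j
  · subst h; rw [Fin.rev_rev]; simp [revCLM]
  · rw [Function.update_of_ne h, Function.update_of_ne (fun hc => h (by rw [← hc, Fin.rev_rev]))]
    rfl

lemma monodDeriv_single (u : Fin n → Matrix (Fin N) (Fin N) ℝ) (j : Fin n)
    (Y : Matrix (Fin N) (Fin N) ℝ) :
    monodDeriv u (Pi.single j Y) = upProd u (j.val + 1) * Y * downProd u j.val := by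
  rw [monodDeriv, ContinuousLinearMap.comp_apply, revCLM_single,
    ContinuousMultilinearMap.linearDeriv_apply]
  rw [Finset.sum_eq_single (Fin.rev j)]
  · rw [Pi.single_eq_same, update_rev]
    rw [ContinuousMultilinearMap.mkPiAlgebraFin_apply]
    rw [show List.ofFn (⇑revCLM (Function.update u j Y))
        = (List.ofFn (Function.update u j Y)).reverse by rw [ofFn_reverse]; rfl]
    exact monod_update u j Y
  · intro i _ hi
    rw [Pi.single_eq_of_ne hi, ContinuousMultilinearMap.mkPiAlgebraFin_apply]
    apply List.prod_eq_zero
    simp only [List.mem_ofFn]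
    exact ⟨i, by simp⟩
  · simp

/-! ### Ad-invariance and the key identity -/

lemma continuous_grad (φ : Matrix (Fin N) (Fin N) ℝ → ℝ) (hφ : ContDiff ℝ (⊤ : ℕ∞) φ) :
    Continuous (grad φ) := by
  apply continuous_matrix
  intro i j
  exact (hφ.continuous_fderiv (by simp)).clm_apply continuous_const

noncomputable def lmulLR (P Q : Matrix (Fin N) (Fin N) ℝ) :
    Matrix (Fin N) (Fin N) ℝ →L[ℝ] Matrix (Fin N) (Fin N) ℝ :=
  ((LinearMap.mulRight ℝ Q).comp (LinearMap.mulLeft ℝ P)).toContinuousLinearMap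

lemma lmulLR_apply (P Q X : Matrix (Fin N) (Fin N) ℝ) : lmulLR P Q X = P * X * Q := rfl

lemma fderiv_conj (φ : Matrix (Fin N) (Fin N) ℝ → ℝ) (hφ : ContDiff ℝ (⊤ : ℕ∞) φ)
    (hAd : AdInvariant φ) (Q : Matrix (Fin N) (Fin N) ℝ) (hQ : IsUnit Q)
    (X H : Matrix (Fin N) (Fin N) ℝ) :
    fderiv ℝ φ X H = fderiv ℝ φ (Q * X * Q⁻¹) (Q * H * Q⁻¹) := by
  have hfun : φ = fun Y => φ (lmulLR Q Q⁻¹ Y) := by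
    funext Y; rw [lmulLR_apply, hAd Y Q hQ]
  conv_lhs => rw [hfun]
  have hdiff : DifferentiableAt ℝ φ (lmulLR Q Q⁻¹ X) := (hφ.differentiable (by simp)).differentiableAt
  have h2 := fderiv_comp (𝕜 := ℝ) X hdiff (lmulLR Q Q⁻¹).differentiableAt
  rw [show (fun Y => φ ((lmulLR Q Q⁻¹) Y)) = φ ∘ ⇑(lmulLR Q Q⁻¹) from rfl]; erw [h2]
  erw [ContinuousLinearMap.comp_apply, ContinuousLinearMap.fderiv]
  rfl

lemma grad_conj (φ : Matrix (Fin N) (Fin N) ℝ → ℝ) (hφ : ContDiff ℝ (⊤ : ℕ∞) φ)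
    (hAd : AdInvariant φ) (Q : Matrix (Fin N) (Fin N) ℝ) (hQ : IsUnit Q)
    (X : Matrix (Fin N) (Fin N) ℝ) :
    grad φ X = Q⁻¹ * grad φ (Q * X * Q⁻¹) * Q := by
  apply tf_ext
  intro H
  rw [tf_grad, fderiv_conj φ hφ hAd Q hQ X H, ← tf_grad]
  rw [tf, tf]
  simp only [← Matrix.mul_assoc]
  rw [Matrix.trace_mul_cycle (grad φ (Q * X * Q⁻¹) * Q) H Q⁻¹]
  simp only [← Matrix.mul_assoc]

lemma key_unit (φ : Matrix (Fin N) (Fin N) ℝ → ℝ) (hφ : ContDiff ℝ (⊤ : ℕ∞) φ)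
    (hAd : AdInvariant φ) (P Q : Matrix (Fin N) (Fin N) ℝ) (hQ : IsUnit Q) :
    P * grad φ (Q * P) * Q = (P * Q) * grad φ (P * Q) := by
  have h := grad_conj φ hφ hAd Q hQ (P * Q)
  have hQQ : Q * (P * Q) * Q⁻¹ = Q * P := by
    rw [Matrix.mul_assoc, Matrix.mul_assoc,
      Matrix.mul_nonsing_inv _ ((Matrix.isUnit_iff_isUnit_det Q).mp hQ), Matrix.mul_one]
  rw [hQQ] at h
  rw [h]
  simp only [← Matrix.mul_assoc]
  rw [Matrix.mul_assoc P Q Q⁻¹,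
    Matrix.mul_nonsing_inv _ ((Matrix.isUnit_iff_isUnit_det Q).mp hQ), Matrix.mul_one]

lemma dense_line (Q : Matrix (Fin N) (Fin N) ℝ) :
    Dense {t : ℝ | IsUnit (Q + t • (1 : Matrix (Fin N) (Fin N) ℝ))} := by
  have hpoly : ∀ t : ℝ, ((-Q).charpoly.eval t) = (Q + t • 1).det := by
    intro t
    rw [Matrix.charpoly, ← Polynomial.coe_evalRingHom, RingHom.map_det]
    congr 1
    ext i j
    by_cases h : i = j
    · subst h; simp [Matrix.charmatrix_apply_eq, Matrix.smul_apply, Matrix.one_apply]; ring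
    · simp [Matrix.charmatrix_apply_ne _ _ _ h, Matrix.one_apply, h, Matrix.smul_apply]
  have hfin : {t : ℝ | ¬ IsUnit (Q + t • (1 : Matrix (Fin N) (Fin N) ℝ))}.Finite := by
    apply Set.Finite.subset (Polynomial.finite_setOf_isRoot ((-Q).charpoly_monic.ne_zero))
    intro t ht
    simp only [Set.mem_setOf_eq] at ht ⊢
    rw [Polynomial.IsRoot, hpoly]
    by_contra hdet
    exact ht ((Matrix.isUnit_iff_isUnit_det _).mpr (isUnit_iff_ne_zero.mpr hdet))
  have := (hfin.countable).dense_compl ℝ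
  convert this using 1
  ext t; simp

lemma key_identity (φ : Matrix (Fin N) (Fin N) ℝ → ℝ) (hφ : ContDiff ℝ (⊤ : ℕ∞) φ)
    (hAd : AdInvariant φ) (P Q : Matrix (Fin N) (Fin N) ℝ) :
    P * grad φ (Q * P) * Q = (P * Q) * grad φ (P * Q) := by
  have hgrad := continuous_grad φ hφ
  have hf : Continuous (fun t : ℝ => P * grad φ ((Q + t • 1) * P) * (Q + t • 1)) := by
    have hline : Continuous (fun t : ℝ => Q + t • (1 : Matrix (Fin N) (Fin N) ℝ)) :=
      continuous_const.add (continuous_id.smul continuous_const)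
    exact ((continuous_const.matrix_mul
      (hgrad.comp (hline.matrix_mul continuous_const))).matrix_mul hline)
  have hg : Continuous (fun t : ℝ => (P * (Q + t • 1)) * grad φ (P * (Q + t • 1))) := by
    have hline : Continuous (fun t : ℝ => P * (Q + t • (1 : Matrix (Fin N) (Fin N) ℝ))) :=
      continuous_const.matrix_mul (continuous_const.add (continuous_id.smul continuous_const))
    exact hline.matrix_mul (hgrad.comp hline)
  have heq := Continuous.ext_on (dense_line Q) hf hg (fun t ht => key_unit φ hφ hAd P _ ht)
  have h0 := congrFun heq 0
  simpa using h0

/-! ### The partial gradients of Φ and Ψ -/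

lemma bigGrad_phi (φ : Matrix (Fin N) (Fin N) ℝ → ℝ) (hφ : ContDiff ℝ (⊤ : ℕ∞) φ)
    (u : Fin n → Matrix (Fin N) (Fin N) ℝ) (j : Fin n) :
    bigGrad (fun w => φ (monod w)) u j
      = downProd u j.val * grad φ (monod u) * upProd u (j.val + 1) := by
  have hM : HasFDerivAt (fun w => φ (monod w))
      ((fderiv ℝ φ (monod u)).comp (monodDeriv u)) u := by
    have h1 := ((hφ.differentiable (by simp)) (monod u)).hasFDerivAt
    exact h1.comp u (hasFDerivAt_monod u)
  ext a' b'
  rw [bigGrad, Matrix.of_apply, hM.fderiv, ContinuousLinearMap.comp_apply, monodDeriv_single,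
    ← tf_grad]
  conv_rhs => rw [← tf_std (downProd u j.val * grad φ (monod u) * upProd u (j.val + 1)) a' b']
  rw [tf, tf]
  simp only [← Matrix.mul_assoc]
  rw [Matrix.trace_mul_cycle (grad φ (monod u) * upProd u (j.val + 1))
    (Matrix.single b' a' 1) (downProd u j.val)]
  simp only [← Matrix.mul_assoc]

lemma ddj'_phi (φ : Matrix (Fin N) (Fin N) ℝ → ℝ) (hφ : ContDiff ℝ (⊤ : ℕ∞) φ)
    (hAd : AdInvariant φ) (u : Fin n → Matrix (Fin N) (Fin N) ℝ) (j : Fin n) :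
    ddj' (fun w => φ (monod w)) u j = dr φ (tmat u j.val) := by
  rw [ddj', bigGrad_phi φ hφ u j]
  rw [Matrix.mul_assoc, ← upProd_succ u j]
  rw [monod_eq_up_down u j.val]
  rw [key_identity φ hφ hAd (downProd u j.val) (upProd u j.val)]
  rw [dr, tmat]

lemma ddj_phi (φ : Matrix (Fin N) (Fin N) ℝ → ℝ) (hφ : ContDiff ℝ (⊤ : ℕ∞) φ)
    (hAd : AdInvariant φ) (u : Fin n → Matrix (Fin N) (Fin N) ℝ) (j : Fin n) :
    ddj (fun w => φ (monod w)) u j = dr φ (tmat u (j.val + 1)) := by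
  rw [ddj, bigGrad_phi φ hφ u j]
  rw [← Matrix.mul_assoc, ← Matrix.mul_assoc, ← downProd_succ u j]
  rw [monod_eq_up_down u (j.val + 1)]
  rw [key_identity φ hφ hAd (downProd u (j.val + 1)) (upProd u (j.val + 1))]
  rw [dr, tmat]

noncomputable def evCLM (i : Fin n) (a b : Fin N) :
    (Fin n → Matrix (Fin N) (Fin N) ℝ) →L[ℝ] ℝ :=
  LinearMap.toContinuousLinearMap
    { toFun := fun w => w i a b
      map_add' := fun x y => rfl
      map_smul' := fun c x => rfl }

lemma bigGrad_psi (u : Fin n → Matrix (Fin N) (Fin N) ℝ) (i : Fin n) (a b : Fin N) (j : Fin n) :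
    bigGrad (fun w => (w i) a b) u j
      = if j = i then Matrix.single b a 1 else 0 := by
  have hfd : fderiv ℝ (fun w : Fin n → Matrix (Fin N) (Fin N) ℝ => (w i) a b) u
      = evCLM i a b := by
    rw [show (fun w : Fin n → Matrix (Fin N) (Fin N) ℝ => (w i) a b) = ⇑(evCLM i a b) from rfl]
    exact ContinuousLinearMap.fderiv _
  ext a' b'
  rw [bigGrad, Matrix.of_apply, hfd]
  have : evCLM (N := N) (n := n) i a b (Pi.single j (Matrix.single b' a' 1))
      = (Pi.single j (Matrix.single b' a' 1) : Fin n → Matrix (Fin N) (Fin N) ℝ) i a b := rfl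
  rw [this]
  by_cases h : j = i
  · subst h
    rw [Pi.single_eq_same, if_pos rfl]
    simp [Matrix.single, Matrix.of_apply, and_comm, eq_comm]
  · rw [Pi.single_eq_of_ne (Ne.symm h), if_neg h]
    rfl

lemma ddj_psi_ne (u : Fin n → Matrix (Fin N) (Fin N) ℝ) (i : Fin n) (a b : Fin N)
    (j : Fin n) (h : j ≠ i) :
    ddj (fun w => (w i) a b) u j = 0 ∧ ddj' (fun w => (w i) a b) u j = 0 := by
  rw [ddj, ddj', bigGrad_psi u i a b j, if_neg h]
  constructor
  · exact Matrix.mul_zero _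
  · exact Matrix.zero_mul _

lemma ddj_psi_eq (u : Fin n → Matrix (Fin N) (Fin N) ℝ) (i : Fin n) (a b : Fin N) :
    ddj (fun w => (w i) a b) u i = u i * Matrix.single b a 1
      ∧ ddj' (fun w => (w i) a b) u i = Matrix.single b a 1 * u i := by
  rw [ddj, ddj', bigGrad_psi u i a b i, if_pos rfl]
  exact ⟨rfl, rfl⟩

lemma finSucc_bijective (hn : 1 ≤ n) : Function.Bijective (finSucc hn) := by
  rw [Fintype.bijective_iff_injective_and_card]
  refine ⟨fun x y hxy => ?_, rfl⟩
  have hx := x.isLt; have hy := y.isLt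
  have : (x.val + 1) % n = (y.val + 1) % n := congrArg Fin.val hxy
  apply Fin.ext
  rcases Nat.lt_or_ge (x.val + 1) n with h | h <;> rcases Nat.lt_or_ge (y.val + 1) n with h' | h'
  · rw [Nat.mod_eq_of_lt h, Nat.mod_eq_of_lt h'] at this; omega
  · rw [Nat.mod_eq_of_lt h, show y.val + 1 = n by omega, Nat.mod_self] at this; omega
  · rw [Nat.mod_eq_of_lt h', show x.val + 1 = n by omega, Nat.mod_self] at this; omega
  · omega

lemma tmat_mod (hn : 1 ≤ n) (u : Fin n → Matrix (Fin N) (Fin N) ℝ) (j : Fin n) :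
    tmat u ((j.val + 1) % n) = tmat u (j.val + 1) := by
  rcases Nat.lt_or_ge (j.val + 1) n with h | h
  · rw [Nat.mod_eq_of_lt h]
  · have : j.val + 1 = n := by have := j.isLt; omega
    rw [this, Nat.mod_self, tmat_zero, tmat_n]

end Aux

theorem statement10 (N n : ℕ) (hN : 1 ≤ N) (hn : 1 ≤ n)
    (A B C D : Fin n → Fin n → (Matrix (Fin N) (Fin N) ℝ →ₗ[ℝ] Matrix (Fin N) (Fin N) ℝ))
    (φ : Matrix (Fin N) (Fin N) ℝ → ℝ) (hφ : ContDiff ℝ (⊤ : ℕ∞) φ) (hAd : AdInvariant φ) :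
    ∀ (i : Fin n) (a b : Fin N) (u : Fin n → Matrix (Fin N) (Fin N) ℝ),
      bigPB A B C D (fun w => φ (monod w)) (fun w => (w i) a b) u
        = (u i * (∑ j : Fin n, (A i (finSucc hn j) + B i j) (dr φ (tmat u (j.val + 1))))
            - (∑ j : Fin n, (D i j + C i (finSucc hn j)) (dr φ (tmat u (j.val + 1)))) * u i)
            a b := by
  intro i a b u
  classical
  have hpsiE := ddj_psi_eq u i a b
  rw [bigPB]
  rw [Finset.sum_eq_single i]
  rotate_left
  · intro i' _ hi'
    obtain ⟨h1, h2⟩ := ddj_psi_ne u i a b i' hi'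
    simp [h1, h2, tf_zero_right]
  · simp
  have hstep : ∀ j : Fin n,
      tf (A i j (ddj' (fun w => φ (monod w)) u j)) (ddj' (fun w => (w i) a b) u i)
        - tf (D i j (ddj (fun w => φ (monod w)) u j)) (ddj (fun w => (w i) a b) u i)
        + tf (B i j (ddj (fun w => φ (monod w)) u j)) (ddj' (fun w => (w i) a b) u i)
        - tf (C i j (ddj' (fun w => φ (monod w)) u j)) (ddj (fun w => (w i) a b) u i)
      = ((u i * A i j (dr φ (tmat u j.val))) a b
          - (D i j (dr φ (tmat u (j.val + 1))) * u i) a b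
          + (u i * B i j (dr φ (tmat u (j.val + 1)))) a b)
          - (C i j (dr φ (tmat u j.val)) * u i) a b := by
    intro j
    rw [ddj'_phi φ hφ hAd u j, ddj_phi φ hφ hAd u j, hpsiE.1, hpsiE.2]
    rw [tf_std_mul, tf_mul_std, tf_std_mul, tf_mul_std]
  rw [Finset.sum_congr rfl (fun j _ => hstep j)]
  rw [Finset.sum_sub_distrib, Finset.sum_add_distrib, Finset.sum_sub_distrib]
  have hsum1 : (∑ j : Fin n, (u i * (A i j) (dr φ (tmat u j.val))) a b)
      = ∑ j : Fin n, (u i * (A i (finSucc hn j)) (dr φ (tmat u (j.val + 1)))) a b := by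
    refine (Fintype.sum_bijective (finSucc hn) (finSucc_bijective hn) _ _ (fun j => ?_)).symm
    rw [show (finSucc hn j).val = (j.val + 1) % n from rfl, tmat_mod hn u j]
  have hsum2 : (∑ j : Fin n, ((C i j) (dr φ (tmat u j.val)) * u i) a b)
      = ∑ j : Fin n, ((C i (finSucc hn j)) (dr φ (tmat u (j.val + 1))) * u i) a b := by
    refine (Fintype.sum_bijective (finSucc hn) (finSucc_bijective hn) _ _ (fun j => ?_)).symm
    rw [show (finSucc hn j).val = (j.val + 1) % n from rfl, tmat_mod hn u j]
  rw [hsum1, hsum2]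
  simp only [Matrix.sub_apply, Matrix.mul_sum, Matrix.sum_mul, Matrix.sum_apply,
    LinearMap.add_apply, Matrix.mul_add, Matrix.add_mul, Matrix.add_apply,
    Finset.sum_add_distrib]
  ring
end
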